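/- For the function H(x,y,m) = (2x−y)/(1+x−y+2(x−y)²)^{m−1}, if m≥6, 0≤y₁≤x₁≤1, 0≤y₂≤x₂≤1, then |H(x₁,y₁,m) − H(x₂,y₂,m)| ≤ (m−2)(|x₁−x₂| + |y₁−y₂|). -/

import Mathlib

/-!
Write `k = m - 1` and `D(t) = 1 + t + 2t²`. The triangle `0 ≤ y ≤ x ≤ 1` is convex and
`D > 0` everywhere, so the mean value theorem along the segment from `(x₂, y₂)` to `(x₁, y₁)`
reduces the claim to `|∂ₓH|, |∂ᵧH| ≤ k - 1` on the triangle. With `u = x - y` and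
`v = 2x - y ∈ [0, 1 + u]` these partials are `(2D - vkD') / D^(k+1)` and `(vkD' - D) / D^(k+1)`,
and both bounds follow from `k(1 + u)(1 + 4u) ≤ (k - 1) D^(k+1) + D`, which Bernoulli's
inequality gives for `k ≥ 5`.
-/

namespace LipschitzH

noncomputable def den (t : ℝ) : ℝ := 1 + t + 2 * t ^ 2

noncomputable def quot (k : ℕ) (x y : ℝ) : ℝ := (2 * x - y) / den (x - y) ^ k

noncomputable def quotDerivX (k : ℕ) (x y : ℝ) : ℝ :=
  (2 * den (x - y) - (2 * x - y) * k * (1 + 4 * (x - y))) / den (x - y) ^ (k + 1)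

noncomputable def quotDerivY (k : ℕ) (x y : ℝ) : ℝ :=
  ((2 * x - y) * k * (1 + 4 * (x - y)) - den (x - y)) / den (x - y) ^ (k + 1)

lemma quot_eq (k : ℕ) (x y : ℝ) :
    quot k x y = (2 * x - y) / (1 + x - y + 2 * (x - y) ^ 2) ^ k := by
  rw [quot, den, add_sub_assoc]

lemma den_pos (t : ℝ) : 0 < den t := by
  unfold den; nlinarith [sq_nonneg (4 * t + 1)]

lemma one_le_den {t : ℝ} (ht : 0 ≤ t) : 1 ≤ den t := by
  unfold den; nlinarith [sq_nonneg t]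

lemma hasDerivAt_den (t : ℝ) : HasDerivAt den (1 + 4 * t) t := by
  refine (((hasDerivAt_id' t).const_add 1).add ((hasDerivAt_pow 2 t).const_mul 2)).congr_deriv ?_
  norm_num; ring

lemma hasDerivAt_quot_comp (k : ℕ) {X Y : ℝ → ℝ} {a b s : ℝ} (hX : HasDerivAt X a s)
    (hY : HasDerivAt Y b s) :
    HasDerivAt (fun s => quot k (X s) (Y s))
      (a * quotDerivX k (X s) (Y s) + b * quotDerivY k (X s) (Y s)) s := by
  have hnum := (hX.const_mul 2).sub hY
  have hden := ((hasDerivAt_den (X s - Y s)).comp s (hX.sub hY)).pow k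
  have hD := den_pos (X s - Y s)
  refine (hnum.div hden (pow_ne_zero k hD.ne')).congr_deriv ?_
  rcases k with _ | j <;>
  · simp only [quotDerivX, quotDerivY, Function.comp, Pi.sub_apply, Pi.pow_apply, Nat.add_sub_cancel]
    field_simp
    ring

lemma natCast_mul_le_den_pow {k : ℕ} (hk : 5 ≤ k) {t : ℝ} (ht : 0 ≤ t) :
    k * (1 + t) * (1 + 4 * t) ≤ (k - 1) * den t ^ (k + 1) + den t := by
  have hk' : (5 : ℝ) ≤ k := by exact_mod_cast hk
  have hbern : 1 + ((k + 1 : ℕ) : ℝ) * (t + 2 * t ^ 2) ≤ den t ^ (k + 1) := by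
    have h := one_add_mul_le_pow (by nlinarith : (-2 : ℝ) ≤ t + 2 * t ^ 2) (k + 1)
    rwa [← add_assoc] at h
  push_cast at hbern
  calc (k : ℝ) * (1 + t) * (1 + 4 * t)
      ≤ (k - 1) * (1 + (k + 1) * (t + 2 * t ^ 2)) + den t := by
        -- the gap is `k t (k - 5) + 2 k t² (k - 2)`
        unfold den
        nlinarith [mul_nonneg (mul_nonneg (by linarith : (0 : ℝ) ≤ k - 5) ht) (by linarith : (0 : ℝ) ≤ k),
          mul_nonneg (mul_nonneg (by linarith : (0 : ℝ) ≤ k - 2) (mul_nonneg ht ht))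
            (by linarith : (0 : ℝ) ≤ k)]
    _ ≤ (k - 1) * den t ^ (k + 1) + den t := by gcongr; linarith

section Triangle

variable {k : ℕ} {x y : ℝ}

lemma quotDeriv_numerator_bounds (hk : 5 ≤ k) (hy : 0 ≤ y) (hyx : y ≤ x) (hx : x ≤ 1) :
    0 ≤ (2 * x - y) * k * (1 + 4 * (x - y)) ∧
    (2 * x - y) * k * (1 + 4 * (x - y)) ≤ (k - 1) * den (x - y) ^ (k + 1) + den (x - y) ∧
    2 * den (x - y) ≤ (k - 1) * den (x - y) ^ (k + 1) := by
  have hu : 0 ≤ x - y := by linarith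
  have hk' : (5 : ℝ) ≤ k := by exact_mod_cast hk
  have hD := one_le_den hu
  refine ⟨mul_nonneg (mul_nonneg (by linarith) k.cast_nonneg) (by linarith), ?_, ?_⟩
  · calc (2 * x - y) * k * (1 + 4 * (x - y)) ≤ k * (1 + (x - y)) * (1 + 4 * (x - y)) := by
          nlinarith [mul_nonneg (by linarith : (0 : ℝ) ≤ k) hu]
      _ ≤ _ := natCast_mul_le_den_pow hk hu
  · calc 2 * den (x - y) ≤ (k - 1) * den (x - y) := by nlinarith
      _ ≤ (k - 1) * den (x - y) ^ (k + 1) := by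
          gcongr
          exacts [by linarith, le_self_pow₀ hD k.succ_ne_zero]

lemma abs_quotDerivX_le (hk : 5 ≤ k) (hy : 0 ≤ y) (hyx : y ≤ x) (hx : x ≤ 1) :
    |quotDerivX k x y| ≤ k - 1 := by
  obtain ⟨hw₀, hw, hD⟩ := quotDeriv_numerator_bounds hk hy hyx hx
  have hpos := pow_pos (den_pos (x - y)) (k + 1)
  rw [quotDerivX, abs_div, abs_of_pos hpos, div_le_iff₀ hpos, abs_le]
  constructor <;> linarith [den_pos (x - y)]

lemma abs_quotDerivY_le (hk : 5 ≤ k) (hy : 0 ≤ y) (hyx : y ≤ x) (hx : x ≤ 1) :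
    |quotDerivY k x y| ≤ k - 1 := by
  obtain ⟨hw₀, hw, hD⟩ := quotDeriv_numerator_bounds hk hy hyx hx
  have hpos := pow_pos (den_pos (x - y)) (k + 1)
  rw [quotDerivY, abs_div, abs_of_pos hpos, div_le_iff₀ hpos, abs_le]
  constructor <;> linarith [den_pos (x - y)]

end Triangle

lemma abs_quot_sub_le {k : ℕ} (hk : 5 ≤ k) {x₁ y₁ x₂ y₂ : ℝ}
    (h₁ : 0 ≤ y₁) (h₂ : y₁ ≤ x₁) (h₃ : x₁ ≤ 1) (h₄ : 0 ≤ y₂) (h₅ : y₂ ≤ x₂) (h₆ : x₂ ≤ 1) :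
    |quot k x₁ y₁ - quot k x₂ y₂| ≤ (k - 1) * (|x₁ - x₂| + |y₁ - y₂|) := by
  set X : ℝ → ℝ := fun s => x₂ + s * (x₁ - x₂)
  set Y : ℝ → ℝ := fun s => y₂ + s * (y₁ - y₂)
  have hline (s : ℝ) : HasDerivAt (fun s => quot k (X s) (Y s))
      ((x₁ - x₂) * quotDerivX k (X s) (Y s) + (y₁ - y₂) * quotDerivY k (X s) (Y s)) s :=
    hasDerivAt_quot_comp k ((hasDerivAt_mul_const _).const_add _) ((hasDerivAt_mul_const _).const_add _)
  have hbound : ∀ s ∈ Set.Ico (0 : ℝ) 1,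
      ‖(x₁ - x₂) * quotDerivX k (X s) (Y s) + (y₁ - y₂) * quotDerivY k (X s) (Y s)‖ ≤
        (k - 1) * (|x₁ - x₂| + |y₁ - y₂|) := by
    rintro s ⟨hs₀, hs₁⟩
    have hs₁' : 0 ≤ 1 - s := by linarith
    have hy : 0 ≤ Y s := by nlinarith [mul_nonneg hs₁' h₄, mul_nonneg hs₀ h₁]
    have hyx : Y s ≤ X s := by
      nlinarith [mul_nonneg hs₁' (sub_nonneg.2 h₅), mul_nonneg hs₀ (sub_nonneg.2 h₂)]
    have hx : X s ≤ 1 := by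
      nlinarith [mul_nonneg hs₁' (sub_nonneg.2 h₆), mul_nonneg hs₀ (sub_nonneg.2 h₃)]
    rw [Real.norm_eq_abs]
    calc _ ≤ |x₁ - x₂| * |quotDerivX k (X s) (Y s)| + |y₁ - y₂| * |quotDerivY k (X s) (Y s)| := by
          rw [← abs_mul, ← abs_mul]; exact abs_add_le _ _
      _ ≤ |x₁ - x₂| * (k - 1) + |y₁ - y₂| * (k - 1) := by
          gcongr
          exacts [abs_quotDerivX_le hk hy hyx hx, abs_quotDerivY_le hk hy hyx hx]
      _ = _ := by ring
  simpa [X, Y] using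
    norm_image_sub_le_of_norm_deriv_le_segment_01' (fun s _ => (hline s).hasDerivWithinAt) hbound

end LipschitzH

open LipschitzH in
/-- For `H(x,y,m) = (2x−y)/(1+x−y+2(x−y)²)^{m−1}`, if `m ≥ 6`,
`0 ≤ y₁ ≤ x₁ ≤ 1` and `0 ≤ y₂ ≤ x₂ ≤ 1`, then
`|H(x₁,y₁,m) − H(x₂,y₂,m)| ≤ (m−2)(|x₁−x₂| + |y₁−y₂|)`. -/
theorem H_lipschitz_bound
    (H : ℝ → ℝ → ℕ → ℝ)
    (hH : ∀ x y m, H x y m = (2 * x - y) / (1 + x - y + 2 * (x - y) ^ 2) ^ (m - 1))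
    (m : ℕ) (hm : 6 ≤ m)
    (x₁ y₁ x₂ y₂ : ℝ)
    (h₁ : 0 ≤ y₁) (h₂ : y₁ ≤ x₁) (h₃ : x₁ ≤ 1)
    (h₄ : 0 ≤ y₂) (h₅ : y₂ ≤ x₂) (h₆ : x₂ ≤ 1) :
    |H x₁ y₁ m - H x₂ y₂ m| ≤ ((m : ℝ) - 2) * (|x₁ - x₂| + |y₁ - y₂|) := by
  have hk : 5 ≤ m - 1 := by omega
  have hcast : ((m - 1 : ℕ) : ℝ) - 1 = m - 2 := by
    push_cast [Nat.cast_sub (by omega : 1 ≤ m)]; ring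
  rw [hH, hH, ← quot_eq, ← quot_eq, ← hcast]
  exact abs_quot_sub_le hk h₁ h₂ h₃ h₄ h₅ h₆
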